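/- Suppose the unconfoundedness assumption and the overlap assumption hold, and fix d ∈ {0,1,...,J}, β*_d ∈ ℝ. Suppose L'(Y*(d) − β*_d) is square-integrable. Let m_d := E[L'(Y*(d) − β*_d)], let 𝓔_d(X) := E[L'(Y*(d) − β*_d) | σ(X)], let Z_d := ((D_d − π*_d(X))/π*_d(X)) · 𝓔_d(X), and let S_d := (D_d/π*_d(X)) L'(Y − β*_d) − Z_d − m_d be the efficient influence function (up to the factor H_d^{-1}). Then E[ S_d · Z_d ] = 0. -/

import Mathlib

/-!
Write `I = D_d`, `W = L'(Y*(d) - β*_d)` and `a = 1 / π*_d(X)`. Because `I² = I`, the product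
`S_d Z_d` equals `(I W) a (a - 1) 𝓔_d + I ((2a - a²) 𝓔_d² - m_d a 𝓔_d) + (m_d 𝓔_d - 𝓔_d²)`,
whose coefficients are `σ(X)`-measurable. Unconfoundedness gives `E[I W | X] = π*_d 𝓔_d`, and
`E[I | X] = π*_d`, so `E[S_d Z_d | X] = (a - 1) 𝓔_d² + (2 - a) 𝓔_d² - 𝓔_d² = 0`.

The identity `E[I W | X] = π*_d 𝓔_d` comes from comparing, on each `σ(X)`-measurable set `s`,
the law of `Y*(d)` under `μ` restricted to `s ∩ {D = d}` with its law under `π*_d · μ`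
restricted to `s`: conditional independence says exactly that these two measures agree.
-/

open MeasureTheory ProbabilityTheory
open scoped ENNReal

lemma influence_mul_eq {i π w e md : ℝ} (hi : i * i = i) (hπ : π ≠ 0) :
    (i / π * w - (i - π) / π * e - md) * ((i - π) / π * e) =
      i * w * (π⁻¹ * (π⁻¹ - 1) * e) + i * ((2 * π⁻¹ - π⁻¹ ^ 2) * e ^ 2 - md * π⁻¹ * e)
        + (md * e - e ^ 2) := by
  field_simp
  linear_combination (e * (w - e)) * hi

section

variable {Ω : Type*} {m mΩ : MeasurableSpace Ω} {μ : Measure Ω}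

lemma abs_condExp_indicator_le_one (B : Set Ω) : ∀ᵐ ω ∂μ, |(μ⟦B | m⟧) ω| ≤ 1 :=
  ae_bdd_abs_condExp_of_ae_bdd_abs (ae_of_all _ fun ω => by
    by_cases h : ω ∈ B <;> simp [h])

lemma condExp_indicator_nonneg (B : Set Ω) : 0 ≤ᵐ[μ] μ⟦B | m⟧ :=
  condExp_nonneg (ae_of_all _ fun _ => Set.indicator_nonneg (fun _ _ => zero_le_one) _)

lemma memLp_top_inv_of_le {π : Ω → ℝ} {c : ℝ} (hc : 0 < c) (hπ : AEMeasurable π μ)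
    (hπc : ∀ᵐ ω ∂μ, c ≤ π ω) : MemLp (fun ω => (π ω)⁻¹) ∞ μ :=
  memLp_top_of_bound hπ.inv.aestronglyMeasurable c⁻¹ (hπc.mono fun ω h => by
    rw [norm_inv, Real.norm_of_nonneg (hc.le.trans h)]
    exact inv_anti₀ hc h)

lemma integral_influence_mul_eq_zero [IsFiniteMeasure μ] (hm : m ≤ mΩ) {I W π E : Ω → ℝ}
    (hI : ∀ ω, I ω * I ω = I ω) (hIb : MemLp I ∞ μ) {c : ℝ} (hc : 0 < c)
    (hπm : StronglyMeasurable[m] π) (hEm : StronglyMeasurable[m] E) (hπ : π =ᵐ[μ] μ[I | m])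
    (hπc : ∀ᵐ ω ∂μ, c ≤ π ω) (hIW : μ[I * W | m] =ᵐ[μ] π * E) (hW : MemLp W 2 μ)
    (hE : MemLp E 2 μ) (md : ℝ) :
    ∫ ω, (I ω / π ω * W ω - (I ω - π ω) / π ω * E ω - md) * ((I ω - π ω) / π ω * E ω) ∂μ
      = 0 := by
  set a : Ω → ℝ := fun ω => (π ω)⁻¹
  set g₁ : Ω → ℝ := fun ω => a ω * (a ω - 1) * E ω
  set g₂ : Ω → ℝ := fun ω => (2 * a ω - a ω ^ 2) * E ω ^ 2 - md * a ω * E ω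
  set g₃ : Ω → ℝ := fun ω => md * E ω - E ω ^ 2
  have hdecomp : (fun ω => (I ω / π ω * W ω - (I ω - π ω) / π ω * E ω - md)
      * ((I ω - π ω) / π ω * E ω)) =ᵐ[μ] I * W * g₁ + I * g₂ + g₃ := by
    filter_upwards [hπc] with ω hω
    exact influence_mul_eq (hI ω) (hc.trans_le hω).ne'
  have ha : MemLp a ∞ μ := memLp_top_inv_of_le hc (hπm.mono hm).measurable.aemeasurable hπc
  have hEi : Integrable E μ := hE.integrable one_le_two
  have ha₁ : MemLp (fun ω => a ω * (a ω - 1)) ∞ μ := (ha.sub (memLp_const 1)).mul' ha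
  have hcoef₁ : MemLp (fun ω => I ω * (a ω * (a ω - 1))) ∞ μ := ha₁.mul' hIb
  have hcoef₂ : MemLp (fun ω => 2 * a ω - a ω * a ω) ∞ μ := (ha.const_mul 2).sub (ha.mul' ha)
  have hint₁ : Integrable (I * W * g₁) μ :=
    ((hW.integrable_mul hE).mul_of_top_left hcoef₁).congr
      (ae_of_all _ fun ω => by simp only [g₁, Pi.mul_apply]; ring)
  have hint₂ : Integrable (I * g₂) μ :=
    (((hE.integrable_sq.mul_of_top_left hcoef₂).sub
      ((hEi.mul_of_top_left ha).const_mul md)).congr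
      (ae_of_all _ fun ω => by simp only [g₂, Pi.mul_apply, Pi.sub_apply]; ring)).mul_of_top_right
      hIb
  have hint₃ : Integrable g₃ μ := (hEi.const_mul md).sub hE.integrable_sq
  have hπm' := hπm.measurable
  have hEm' := hEm.measurable
  have hg₁ : StronglyMeasurable[m] g₁ := by unfold g₁ a; fun_prop
  have hg₂ : StronglyMeasurable[m] g₂ := by unfold g₂ a; fun_prop
  have hg₃ : StronglyMeasurable[m] g₃ := by unfold g₃; fun_prop
  have hcond : μ[I * W * g₁ + I * g₂ + g₃ | m] =ᵐ[μ] 0 := by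
    filter_upwards [condExp_add (hint₁.add hint₂) hint₃ m, condExp_add hint₁ hint₂ m,
      condExp_mul_of_stronglyMeasurable_right hg₁ hint₁
        ((hW.integrable one_le_two).mul_of_top_right hIb),
      condExp_mul_of_stronglyMeasurable_right hg₂ hint₂ (hIb.integrable le_top),
      hIW, hπ, hπc] with ω h₁ h₂ h₃ h₄ h₅ h₆ h₇
    have : π ω ≠ 0 := (hc.trans_le h₇).ne'
    rw [h₁, Pi.add_apply, h₂, Pi.add_apply, h₃, h₄, condExp_of_stronglyMeasurable hm hg₃ hint₃]
    simp only [Pi.mul_apply, h₅, ← h₆, Pi.zero_apply, g₁, g₂, g₃, a]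
    field_simp; ring
  rw [integral_congr_ae hdecomp, ← integral_condExp hm, integral_congr_ae hcond]
  simp

end

namespace ProbabilityTheory

variable {Ω β γ : Type*} {m mΩ : MeasurableSpace Ω} [StandardBorelSpace Ω] {hm : m ≤ mΩ}
  {μ : Measure Ω} [IsFiniteMeasure μ] [MeasurableSpace β] [MeasurableSpace γ]
  {Y : Ω → β} {D : Ω → γ} {s : Set Ω} {T : Set γ}

lemma CondIndepFun.measureReal_inter_preimage (h : CondIndepFun m hm Y D μ) (hY : Measurable Y)
    (hD : Measurable D) (hs : MeasurableSet[m] s) {t : Set β} (ht : MeasurableSet t)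
    (hT : MeasurableSet T) :
    μ.real (s ∩ D ⁻¹' T ∩ Y ⁻¹' t) = ∫ ω in s ∩ Y ⁻¹' t, (μ⟦D ⁻¹' T | m⟧) ω ∂μ := by
  have hYt : MeasurableSet (Y ⁻¹' t) := hY ht
  calc μ.real (s ∩ D ⁻¹' T ∩ Y ⁻¹' t)
      = ∫ ω in s, (Y ⁻¹' t ∩ D ⁻¹' T).indicator (fun _ => (1 : ℝ)) ω ∂μ := by
        rw [integral_indicator_const _ (hYt.inter (hD hT)), smul_eq_mul, mul_one,
          measureReal_restrict_apply (hYt.inter (hD hT))]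
        congr 1
        ext; simp only [Set.mem_inter_iff]; tauto
    _ = ∫ ω in s, (μ⟦Y ⁻¹' t ∩ D ⁻¹' T | m⟧) ω ∂μ :=
        (setIntegral_condExp hm ((integrable_const 1).indicator (hYt.inter (hD hT))) hs).symm
    _ = ∫ ω in s, (μ⟦Y ⁻¹' t | m⟧) ω * (μ⟦D ⁻¹' T | m⟧) ω ∂μ :=
        setIntegral_congr_ae (hm s hs)
          (((condIndepFun_iff_condExp_inter_preimage_eq_mul hY hD).1 h t T ht hT).mono
            fun _ h _ => h)
    _ = ∫ ω in s, μ[(Y ⁻¹' t).indicator (μ⟦D ⁻¹' T | m⟧) | m] ω ∂μ := by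
        have hπ : StronglyMeasurable[m] (μ⟦D ⁻¹' T | m⟧) := stronglyMeasurable_condExp
        have hprod : (Y ⁻¹' t).indicator (μ⟦D ⁻¹' T | m⟧) =
            (Y ⁻¹' t).indicator (fun _ => (1 : ℝ)) * μ⟦D ⁻¹' T | m⟧ := by
          ext ω; by_cases hω : ω ∈ Y ⁻¹' t <;> simp [hω]
        rw [hprod]
        refine setIntegral_congr_ae (hm s hs) ?_
        filter_upwards [condExp_mul_of_stronglyMeasurable_right hπ
          (hprod ▸ integrable_condExp.indicator hYt) ((integrable_const 1).indicator hYt)]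
          with ω hω _
        exact hω.symm
    _ = ∫ ω in s ∩ Y ⁻¹' t, (μ⟦D ⁻¹' T | m⟧) ω ∂μ := by
        rw [setIntegral_condExp hm (integrable_condExp.indicator hYt) hs, integral_indicator hYt,
          Measure.restrict_restrict hYt, Set.inter_comm]

lemma CondIndepFun.map_restrict_inter_preimage (h : CondIndepFun m hm Y D μ) (hY : Measurable Y)
    (hD : Measurable D) (hs : MeasurableSet[m] s) (hT : MeasurableSet T) :
    (μ.restrict (s ∩ D ⁻¹' T)).map Y =
      ((μ.restrict s).withDensity fun ω => ENNReal.ofReal ((μ⟦D ⁻¹' T | m⟧) ω)).map Y := by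
  ext t ht
  rw [Measure.map_apply hY ht, Measure.map_apply hY ht, withDensity_apply _ (hY ht),
    Measure.restrict_apply (hY ht), Measure.restrict_restrict (hY ht),
    ← ofReal_integral_eq_lintegral_ofReal integrable_condExp.integrableOn
      (ae_restrict_of_ae (condExp_indicator_nonneg _)),
    Set.inter_comm (Y ⁻¹' t), Set.inter_comm (Y ⁻¹' t) s,
    ← h.measureReal_inter_preimage hY hD hs ht hT, ofReal_measureReal]

lemma CondIndepFun.setIntegral_inter_preimage_comp (h : CondIndepFun m hm Y D μ)
    (hY : Measurable Y) (hD : Measurable D) (hs : MeasurableSet[m] s) (hT : MeasurableSet T)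
    {w : β → ℝ} (hw : Measurable w) :
    ∫ ω in s ∩ D ⁻¹' T, w (Y ω) ∂μ = ∫ ω in s, (μ⟦D ⁻¹' T | m⟧) ω * w (Y ω) ∂μ := by
  rw [← integral_map hY.aemeasurable hw.aestronglyMeasurable,
    h.map_restrict_inter_preimage hY hD hs hT,
    integral_map hY.aemeasurable hw.aestronglyMeasurable,
    integral_withDensity_eq_integral_toReal_smul
      (stronglyMeasurable_condExp.mono hm).measurable.ennreal_ofReal
      (ae_of_all _ fun _ => ENNReal.ofReal_lt_top)]
  refine integral_congr_ae ?_
  filter_upwards [ae_restrict_of_ae (condExp_indicator_nonneg (μ := μ) (m := m) (D ⁻¹' T))]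
    with ω hω
  simp [ENNReal.toReal_ofReal hω]

lemma CondIndepFun.condExp_indicator_comp (h : CondIndepFun m hm Y D μ) (hY : Measurable Y)
    (hD : Measurable D) (hT : MeasurableSet T) {w : β → ℝ} (hw : Measurable w)
    (hwY : Integrable (w ∘ Y) μ) :
    μ[(D ⁻¹' T).indicator (w ∘ Y) | m] =ᵐ[μ] μ⟦D ⁻¹' T | m⟧ * μ[w ∘ Y | m] := by
  have hπ : StronglyMeasurable[m] (μ⟦D ⁻¹' T | m⟧) := stronglyMeasurable_condExp
  have hπwY : Integrable (μ⟦D ⁻¹' T | m⟧ * w ∘ Y) μ :=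
    hwY.bdd_mul (c := 1) integrable_condExp.1 (by simpa using abs_condExp_indicator_le_one _)
  have hpull := condExp_mul_of_stronglyMeasurable_left hπ hπwY hwY
  refine (ae_eq_condExp_of_forall_setIntegral_eq hm (hwY.indicator (hD hT))
    (fun s _ _ => (integrable_condExp.congr hpull).integrableOn) (fun s hs _ => ?_)
    (hπ.mul stronglyMeasurable_condExp).aestronglyMeasurable).symm
  rw [setIntegral_congr_ae (hm s hs) (hpull.mono fun _ h _ => h.symm),
    setIntegral_condExp hm hπwY hs, integral_indicator (hD hT),
    Measure.restrict_restrict (hD hT), Set.inter_comm]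
  exact (h.setIntegral_inter_preimage_comp hY hD hs hT hw).symm

end ProbabilityTheory

theorem influence_orthogonality_general
    {Ω : Type*} [MeasurableSpace Ω] [StandardBorelSpace Ω] [Nonempty Ω]
    (μ : Measure Ω) [IsProbabilityMeasure μ]
    {J : ℕ} (D : Ω → Fin (J + 1)) (hD : Measurable D)
    {p : ℕ} (X : Ω → (Fin p → ℝ)) (hX : Measurable X)
    (Ystar : Fin (J + 1) → Ω → ℝ) (hY : ∀ d, Measurable (Ystar d))
    -- unconfoundedness
    (hUnconf : ∀ d : Fin (J + 1),
      CondIndepFun (MeasurableSpace.comap X inferInstance) hX.comap_le (Ystar d) D μ)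
    -- propensity scores
    (π : Fin (J + 1) → Ω → ℝ)
    (hπmeas : ∀ d, Measurable[MeasurableSpace.comap X inferInstance] (π d))
    (hπ : ∀ d : Fin (J + 1), π d =ᵐ[μ]
      μ[(fun ω => if D ω = d then (1 : ℝ) else 0) | MeasurableSpace.comap X inferInstance])
    -- overlap
    (c cbar : ℝ) (hc : 0 < c)
    (hOverlap : ∀ d : Fin (J + 1), ∀ᵐ ω ∂μ, π d ω ∈ Set.Icc c cbar)
    -- convex loss with a.e. derivative `L'`
    (L' : ℝ → ℝ) (hL'meas : Measurable L')
    (d : Fin (J + 1)) (βstar : ℝ)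
    (hsq : MemLp (fun ω => L' (Ystar d ω - βstar)) 2 μ)
    -- `m_d := E[L'(Y*(d) − β*_d)]`
    (md : ℝ)
    -- `𝓔_d(X)`, a `σ(X)`-measurable version of `E[L'(Y*(d) − β*_d) | σ(X)]`
    (Ed : Ω → ℝ) (hEdmeas : Measurable[MeasurableSpace.comap X inferInstance] Ed)
    (hEd : Ed =ᵐ[μ]
      μ[(fun ω => L' (Ystar d ω - βstar)) | MeasurableSpace.comap X inferInstance]) :
    ∫ ω,
        ((if D ω = d then (1 : ℝ) else 0) / π d ω * L' (Ystar (D ω) ω - βstar)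
            - ((if D ω = d then (1 : ℝ) else 0) - π d ω) / π d ω * Ed ω - md)
          * (((if D ω = d then (1 : ℝ) else 0) - π d ω) / π d ω * Ed ω) ∂μ = 0 := by
  set I : Ω → ℝ := fun ω => if D ω = d then 1 else 0
  have hB : MeasurableSet (D ⁻¹' {d}) := hD (measurableSet_singleton d)
  have hI : ∀ ω, I ω * I ω = I ω := fun ω => by by_cases h : D ω = d <;> simp [I, h]
  have hIeq : I = (D ⁻¹' {d}).indicator fun _ => 1 := by
    ext ω; by_cases h : D ω = d <;> simp [I, h]
  have hIb : MemLp I ∞ μ := hIeq ▸ (memLp_top_const 1).indicator hB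
  have hw : Measurable fun y => L' (y - βstar) :=
    hL'meas.comp (measurable_id.sub measurable_const)
  have hIW : μ[I * fun ω => L' (Ystar d ω - βstar) | MeasurableSpace.comap X inferInstance]
      =ᵐ[μ] π d * Ed := by
    refine (condExp_congr_ae (ae_of_all _ fun ω => ?_)).trans
      ((((hUnconf d).condExp_indicator_comp (hY d) hD (measurableSet_singleton d) hw
        (hsq.integrable one_le_two)).trans ?_))
    · by_cases h : D ω = d <;> simp [I, h]
    · have hπB : π d =ᵐ[μ] μ⟦D ⁻¹' {d} | MeasurableSpace.comap X inferInstance⟧ := by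
        rw [← hIeq]; exact hπ d
      filter_upwards [hπB, hEd] with ω hπω hEω
      rw [Pi.mul_apply, Pi.mul_apply, hπω, hEω]
      rfl
  have key := integral_influence_mul_eq_zero hX.comap_le hI hIb hc (hπmeas d).stronglyMeasurable
    hEdmeas.stronglyMeasurable (hπ d) ((hOverlap d).mono fun _ h => h.1) hIW hsq
    ((hsq.condExp one_le_two).ae_eq hEd.symm) md
  refine (integral_congr_ae (ae_of_all _ fun ω => ?_)).trans key
  by_cases h : D ω = d <;> simp [I, h]

/-- Under unconfoundedness and overlap, with `L'(Y*(d) − β*_d)`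
square-integrable, the efficient influence function
`S_d = (D_d/π*_d(X)) L'(Y − β*_d) − Z_d − m_d`, where
`Z_d = ((D_d − π*_d(X))/π*_d(X)) 𝓔_d(X)` and `𝓔_d(X) = E[L'(Y*(d) − β*_d) | σ(X)]`,
is orthogonal to `Z_d`: `E[S_d · Z_d] = 0`. -/
theorem influence_orthogonality
    {Ω : Type*} [MeasurableSpace Ω] [StandardBorelSpace Ω] [Nonempty Ω]
    (μ : Measure Ω) [IsProbabilityMeasure μ]
    {J : ℕ} (D : Ω → Fin (J + 1)) (hD : Measurable D)
    {p : ℕ} (X : Ω → (Fin p → ℝ)) (hX : Measurable X)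
    (Ystar : Fin (J + 1) → Ω → ℝ) (hY : ∀ d, Measurable (Ystar d))
    -- unconfoundedness
    (hUnconf : ∀ d : Fin (J + 1),
      CondIndepFun (MeasurableSpace.comap X inferInstance) hX.comap_le (Ystar d) D μ)
    -- propensity scores
    (π : Fin (J + 1) → Ω → ℝ)
    (hπmeas : ∀ d, Measurable[MeasurableSpace.comap X inferInstance] (π d))
    (hπ : ∀ d : Fin (J + 1), π d =ᵐ[μ]
      μ[(fun ω => if D ω = d then (1 : ℝ) else 0) | MeasurableSpace.comap X inferInstance])
    -- overlap
    (c cbar : ℝ) (hc : 0 < c) (hcbar : cbar < 1)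
    (hOverlap : ∀ d : Fin (J + 1), ∀ᵐ ω ∂μ, π d ω ∈ Set.Icc c cbar)
    -- convex loss with a.e. derivative `L'`
    (L L' : ℝ → ℝ) (hL : ConvexOn ℝ Set.univ L) (hL'meas : Measurable L')
    (hL' : ∀ᵐ y ∂(volume : Measure ℝ), HasDerivAt L (L' y) y)
    (d : Fin (J + 1)) (βstar : ℝ)
    (hsq : MemLp (fun ω => L' (Ystar d ω - βstar)) 2 μ)
    -- `m_d := E[L'(Y*(d) − β*_d)]`
    (md : ℝ) (hmd : ∫ ω, L' (Ystar d ω - βstar) ∂μ = md)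
    -- `𝓔_d(X)`, a `σ(X)`-measurable version of `E[L'(Y*(d) − β*_d) | σ(X)]`
    (Ed : Ω → ℝ) (hEdmeas : Measurable[MeasurableSpace.comap X inferInstance] Ed)
    (hEd : Ed =ᵐ[μ]
      μ[(fun ω => L' (Ystar d ω - βstar)) | MeasurableSpace.comap X inferInstance]) :
    ∫ ω,
        ((if D ω = d then (1 : ℝ) else 0) / π d ω * L' (Ystar (D ω) ω - βstar)
            - ((if D ω = d then (1 : ℝ) else 0) - π d ω) / π d ω * Ed ω - md)
          * (((if D ω = d then (1 : ℝ) else 0) - π d ω) / π d ω * Ed ω) ∂μ = 0 :=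
  influence_orthogonality_general μ D hD X hX Ystar hY hUnconf π hπmeas hπ c cbar hc hOverlap L'
    hL'meas d βstar hsq md Ed hEdmeas hEd
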